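/- Let Ξ ⊂ L·ℤ² with L sufficiently large, let x₀ ∈ ℝ², and let (g_i)_{ξ_i ∈ Ξ} be nonnegative reals. Suppose h : ℝ² → ℝ satisfies |h(x)| ≤ C·∑_{i,j ∈ Ξ, i≠j} g_i·θ(x − ξ_j)·θ(ξ_i − ξ_j) for all x, where θ(z) = (1+|z|)^{-3}. Then ∫_{ℝ²} |h(x)|·θ(x−x₀) dx ≤ C₁·∑_{i ∈ Ξ} g_i·θ(x₀ − ξ_i), with C₁ independent of L, x₀, and Ξ. -/

import Mathlib

/-!
The kernel `θ(z) = (1 + |z|)⁻³` satisfies `θ(u) θ(v) ≤ 8 θ(u - v) (θ(u) + θ(v))`, since the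
longer of `u`, `v` has length at least `|u - v| / 2`. Integrating this against any measure whose
`θ`-potential `∫ θ(x - y) dμ(x)` is at most `A` for every `y` gives
`∫ θ(x - a) θ(x - b) dμ(x) ≤ 16 A θ(a - b)`. For Lebesgue measure `A = ∫ θ`; for the counting
measure on `L·ℤ²` with `L ≥ 1` one may take `A = 8 ∑_{n ∈ ℤ²} θ(n)`, independently of `L`,
because every point of the plane lies within distance `L` of the lattice. Integrating the bound
on `|h|` in `x` with the first estimate and then summing over `j` with the second gives the
theorem.
-/

open MeasureTheory

noncomputable def theta (z : EuclideanSpace ℝ (Fin 2)) : ℝ := ((1 + ‖z‖) ^ 3)⁻¹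

noncomputable def latt (n : ℤ × ℤ) : EuclideanSpace ℝ (Fin 2) :=
  (WithLp.equiv 2 (Fin 2 → ℝ)).symm ![(n.1 : ℝ), (n.2 : ℝ)]

open ENNReal Filter

local notation "ℝ²" => EuclideanSpace ℝ (Fin 2)

local notation "Θ" z:max => ENNReal.ofReal (theta z)

lemma ENNReal.ofReal_tsum_le_tsum_ofReal {α : Type*} {f : α → ℝ} (hf : ∀ a, 0 ≤ f a) :
    ENNReal.ofReal (∑' a, f a) ≤ ∑' a, ENNReal.ofReal (f a) := by
  by_cases hs : Summable f
  · exact (ENNReal.ofReal_tsum_of_nonneg hf hs).le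
  · simp [tsum_eq_zero_of_not_summable hs]

lemma ENNReal.ofReal_tsum_tsum_ite_le {ι : Type*} (P : ι → ι → Prop) [DecidableRel P]
    {t : ι → ι → ℝ} (ht : ∀ i j, 0 ≤ t i j) :
    ENNReal.ofReal (∑' i, ∑' j, if P i j then t i j else 0) ≤
      ∑' i, ∑' j, ENNReal.ofReal (t i j) := by
  have hite : ∀ i j, 0 ≤ if P i j then t i j else 0 := fun i j => by
    split_ifs
    exacts [ht i j, le_rfl]
  refine (ofReal_tsum_le_tsum_ofReal fun i => tsum_nonneg (hite i)).trans <|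
    ENNReal.tsum_le_tsum fun i => (ofReal_tsum_le_tsum_ofReal (hite i)).trans <|
    ENNReal.tsum_le_tsum fun j => ofReal_le_ofReal ?_
  split_ifs
  exacts [le_rfl, ht i j]

lemma theta_nonneg (z : ℝ²) : 0 ≤ theta z := by
  unfold theta; positivity

lemma theta_sub_rev (a b : ℝ²) : theta (a - b) = theta (b - a) := by
  rw [theta, theta, norm_sub_rev]

@[fun_prop]
lemma measurable_theta : Measurable theta := by
  unfold theta; fun_prop

lemma theta_le_pow_mul_theta {a b : ℝ²} {c : ℝ} (h : 1 + ‖b‖ ≤ c * (1 + ‖a‖)) :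
    theta a ≤ c ^ 3 * theta b := by
  have ha : 0 < 1 + ‖a‖ := by positivity
  have hc : 0 < c := pos_of_mul_pos_left (lt_of_lt_of_le (by positivity) h) ha.le
  calc theta a = c ^ 3 * ((c * (1 + ‖a‖)) ^ 3)⁻¹ := by
        rw [theta, mul_pow, mul_inv, ← mul_assoc, mul_inv_cancel₀ (by positivity), one_mul]
    _ ≤ c ^ 3 * theta b := by unfold theta; gcongr

lemma theta_mul_theta_le (u v : ℝ²) :
    theta u * theta v ≤ 8 * theta (u - v) * (theta u + theta v) := by
  have long : ∀ w : ℝ², ‖u - v‖ ≤ 2 * ‖w‖ → theta w ≤ 8 * theta (u - v) := fun w hw =>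
    (theta_le_pow_mul_theta (a := w) (b := u - v) (c := 2) (by linarith)).trans_eq (by norm_num)
  have := norm_sub_le u v
  have := theta_nonneg u
  have := theta_nonneg v
  rcases le_total ‖u‖ ‖v‖ with huv | hvu
  · nlinarith [long v (by linarith)]
  · nlinarith [long u (by linarith)]

lemma ofReal_theta_mul_le (u v : ℝ²) :
    Θ u * Θ v ≤ 8 * Θ (u - v) * (Θ u + Θ v) := by
  rw [← ofReal_mul (theta_nonneg u), ← ofReal_add (theta_nonneg u) (theta_nonneg v),
    ← ofReal_ofNat 8, ← ofReal_mul (by norm_num),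
    ← ofReal_mul (mul_nonneg (by norm_num) (theta_nonneg _))]
  exact ofReal_le_ofReal (theta_mul_theta_le u v)

lemma lintegral_theta_mul_theta_le (μ : Measure ℝ²) {A : ℝ≥0∞}
    (hA : ∀ y, ∫⁻ x, Θ (x - y) ∂μ ≤ A) (y z : ℝ²) :
    ∫⁻ x, Θ (x - y) * Θ (x - z) ∂μ ≤ 16 * A * Θ (y - z) :=
  calc ∫⁻ x, Θ (x - y) * Θ (x - z) ∂μ
      ≤ ∫⁻ x, 8 * Θ (y - z) * (Θ (x - y) + Θ (x - z)) ∂μ := lintegral_mono fun x => by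
        have h := ofReal_theta_mul_le (x - y) (x - z)
        rwa [show x - y - (x - z) = z - y by abel, theta_sub_rev z] at h
    _ = 8 * Θ (y - z) * (∫⁻ x, Θ (x - y) ∂μ + ∫⁻ x, Θ (x - z) ∂μ) := by
        rw [lintegral_const_mul _ (by fun_prop), lintegral_add_left (by fun_prop)]
    _ ≤ 8 * Θ (y - z) * (A + A) := by gcongr <;> apply hA
    _ = 16 * A * Θ (y - z) := by ring

lemma tsum_theta_mul_theta_le {ι : Type*} (ξ : ι → ℝ²) {A : ℝ≥0∞}
    (hA : ∀ y, ∑' j, Θ (ξ j - y) ≤ A) (y z : ℝ²) :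
    ∑' j, Θ (ξ j - y) * Θ (ξ j - z) ≤ 16 * A * Θ (y - z) := by
  have h := lintegral_theta_mul_theta_le (Measure.sum fun j => Measure.dirac (ξ j))
    (by simpa only [lintegral_sum_measure, lintegral_dirac] using hA) y z
  simpa only [lintegral_sum_measure, lintegral_dirac] using h

lemma integrable_theta : Integrable theta := by
  refine (integrable_one_add_norm (E := ℝ²) (μ := volume) (r := 3)
    (by simp only [finrank_euclideanSpace, Fintype.card_fin]; norm_num)).congr (ae_of_all _ ?_)
  intro x
  rw [theta, ← Real.rpow_natCast, ← Real.rpow_neg (by positivity)]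
  norm_num

lemma integral_theta_pos : 0 < ∫ x, theta x := by
  rw [integral_pos_iff_support_of_nonneg theta_nonneg integrable_theta,
    Function.support_eq_univ fun z => (by unfold theta; positivity)]
  simp

lemma lintegral_theta_sub (y : ℝ²) : ∫⁻ x, Θ (x - y) = ENNReal.ofReal (∫ x, theta x) := by
  rw [lintegral_sub_right_eq_self (fun x => Θ x) y,
    ofReal_integral_eq_lintegral_ofReal integrable_theta (ae_of_all _ theta_nonneg)]

lemma latt_sub (m n : ℤ × ℤ) : latt (m - n) = latt m - latt n := by
  ext i; fin_cases i <;> simp [latt]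

lemma exists_norm_sub_latt_le_one (y : ℝ²) : ∃ m, ‖y - latt m‖ ≤ 1 := by
  refine ⟨(round (y 0), round (y 1)), ?_⟩
  have h0 := abs_sub_round (y 0)
  have h1 := abs_sub_round (y 1)
  rw [EuclideanSpace.norm_eq, Real.sqrt_le_one, Fin.sum_univ_two]
  change ‖y 0 - round (y 0)‖ ^ 2 + ‖y 1 - round (y 1)‖ ^ 2 ≤ 1
  rw [Real.norm_eq_abs, Real.norm_eq_abs, sq_abs, sq_abs]
  nlinarith [abs_le.1 h0, abs_le.1 h1]

lemma norm_le_norm_latt (n : ℤ × ℤ) : ‖(finTwoArrowEquiv ℤ).symm n‖ ≤ ‖latt n‖ := by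
  refine (pi_norm_le_iff_of_nonneg (norm_nonneg _)).2 fun i => ?_
  rw [← Int.norm_cast_real]
  refine le_trans (le_of_eq ?_) (PiLp.norm_apply_le (latt n) i)
  fin_cases i <;> rfl

lemma summable_theta_latt : Summable fun n : ℤ × ℤ => theta (latt n) := by
  refine ((EisensteinSeries.summable_one_div_norm_rpow (k := 3) (by norm_num)).comp_injective
    (finTwoArrowEquiv ℤ).symm.injective).of_norm_bounded_eventually ?_
  filter_upwards [eventually_cofinite_ne 0] with n hn
  have hpos : 0 < ‖(finTwoArrowEquiv ℤ).symm n‖ := by simpa [Prod.ext_iff] using hn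
  rw [Real.norm_of_nonneg (theta_nonneg _), Function.comp_apply, Real.rpow_neg hpos.le,
    theta]
  norm_cast
  gcongr
  linarith [norm_le_norm_latt n]

lemma tsum_theta_latt_pos : 0 < ∑' n, theta (latt n) :=
  summable_theta_latt.tsum_pos (fun n => theta_nonneg _) 0 (by unfold theta; positivity)

lemma tsum_theta_smul_latt_sub_le {L : ℝ} (hL : 1 ≤ L) (x : ℝ²) :
    ∑' n, Θ (L • latt n - x) ≤ 8 * ∑' n, Θ (latt n) := by
  have hL0 : 0 < L := by linarith
  obtain ⟨m, hm⟩ := exists_norm_sub_latt_le_one (L⁻¹ • x)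
  have hxm : ‖x - L • latt m‖ ≤ L := by
    rw [← smul_inv_smul₀ hL0.ne' x, ← smul_sub, norm_smul, Real.norm_of_nonneg hL0.le]
    nlinarith
  have hcomp : ∀ n, theta (L • latt n - x) ≤ 8 * theta (latt (n - m)) := fun n => by
    have htri : L * ‖latt (n - m)‖ ≤ ‖L • latt n - x‖ + L :=
      calc L * ‖latt (n - m)‖ = ‖(L • latt n - x) + (x - L • latt m)‖ := by
            rw [sub_add_sub_cancel, ← smul_sub, ← latt_sub, norm_smul,
              Real.norm_of_nonneg hL0.le]
        _ ≤ ‖L • latt n - x‖ + L := (norm_add_le _ _).trans (by linarith)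
    refine (theta_le_pow_mul_theta (b := latt (n - m)) (c := 2) ?_).trans_eq (by norm_num)
    nlinarith [norm_nonneg (L • latt n - x), norm_nonneg (latt (n - m))]
  calc ∑' n, Θ (L • latt n - x) ≤ ∑' n, 8 * Θ (latt (n - m)) := ENNReal.tsum_le_tsum fun n => by
        rw [← ofReal_ofNat 8, ← ofReal_mul (by norm_num)]
        exact ofReal_le_ofReal (hcomp n)
    _ = 8 * ∑' n, Θ (latt n) := by
        rw [ENNReal.tsum_mul_left]
        exact congrArg _ ((Equiv.subRight m).tsum_eq fun n => Θ (latt n))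

lemma ofReal_le_mul_tsum_tsum_theta {ι : Type*} (P : ι → ι → Prop) [DecidableRel P]
    (ξ : ι → ℝ²) {g : ι → ℝ} (hg : ∀ i, 0 ≤ g i) {C r : ℝ} (hC : 0 ≤ C) {x : ℝ²}
    (hr : r ≤ C * ∑' i, ∑' j, if P i j then g i * theta (x - ξ j) * theta (ξ i - ξ j) else 0) :
    ENNReal.ofReal r ≤
      ENNReal.ofReal C * ∑' i, ∑' j, ENNReal.ofReal (g i) * Θ (x - ξ j) * Θ (ξ i - ξ j) := by
  refine (ofReal_le_ofReal hr).trans ?_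
  rw [ofReal_mul hC]
  gcongr
  simpa only [ofReal_mul' (theta_nonneg _)] using ENNReal.ofReal_tsum_tsum_ite_le P
    fun i j => mul_nonneg (mul_nonneg (hg i) (theta_nonneg _)) (theta_nonneg _)

lemma lintegral_tsum_tsum_theta_le {ι : Type*} [Countable ι] (μ : Measure ℝ²) {J A : ℝ≥0∞}
    (hJ : ∀ y, ∫⁻ x, Θ (x - y) ∂μ ≤ J) (ξ : ι → ℝ²) (hA : ∀ y, ∑' j, Θ (ξ j - y) ≤ A)
    (w : ι → ℝ≥0∞) (x₀ : ℝ²) :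
    ∫⁻ x, (∑' i, ∑' j, w i * Θ (x - ξ j) * Θ (ξ i - ξ j)) * Θ (x - x₀) ∂μ ≤
      256 * J * A * ∑' i, w i * Θ (x₀ - ξ i) := by
  have exchange : ∫⁻ x, (∑' i, ∑' j, w i * Θ (x - ξ j) * Θ (ξ i - ξ j)) * Θ (x - x₀) ∂μ =
      ∑' i, ∑' j, w i * Θ (ξ i - ξ j) * ∫⁻ x, Θ (x - ξ j) * Θ (x - x₀) ∂μ := by
    simp only [← ENNReal.tsum_mul_right]
    rw [lintegral_tsum (by fun_prop)]
    refine tsum_congr fun i => ?_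
    rw [lintegral_tsum (by fun_prop)]
    refine tsum_congr fun j => ?_
    rw [← lintegral_const_mul _ (by fun_prop)]
    exact lintegral_congr fun x => by ring
  calc _ = ∑' i, ∑' j, w i * Θ (ξ i - ξ j) * ∫⁻ x, Θ (x - ξ j) * Θ (x - x₀) ∂μ := exchange
    _ ≤ ∑' i, ∑' j, w i * Θ (ξ i - ξ j) * (16 * J * Θ (ξ j - x₀)) := by
        gcongr with i j
        exact lintegral_theta_mul_theta_le μ hJ _ _
    _ = 16 * J * ∑' i, w i * ∑' j, Θ (ξ j - ξ i) * Θ (ξ j - x₀) := by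
        simp only [← ENNReal.tsum_mul_left]
        exact tsum_congr fun i => tsum_congr fun j => by rw [theta_sub_rev (ξ i)]; ring
    _ ≤ 16 * J * ∑' i, w i * (16 * A * Θ (ξ i - x₀)) := by
        gcongr with i
        exact tsum_theta_mul_theta_le ξ hA _ _
    _ = 256 * J * A * ∑' i, w i * Θ (x₀ - ξ i) := by
        simp only [← ENNReal.tsum_mul_left]
        exact tsum_congr fun i => by rw [theta_sub_rev (ξ i)]; ring

theorem weighted_integral_offdiagonal_bound :
    ∀ C > (0 : ℝ), ∃ C₁ > (0 : ℝ), ∃ L₀ > (0 : ℝ), ∀ L ≥ L₀,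
      ∀ (x₀ : EuclideanSpace ℝ (Fin 2)) (Ξ : Set (ℤ × ℤ)) (g : ℤ × ℤ → ℝ)
        (h : EuclideanSpace ℝ (Fin 2) → ℝ),
        (∀ i, 0 ≤ g i) →
        Summable (fun i : Ξ => g i * theta (x₀ - L • latt i)) →
        (∀ x, |h x| ≤ C * ∑' i : Ξ, ∑' j : Ξ,
            if (i : ℤ × ℤ) ≠ (j : ℤ × ℤ) then
              g i * theta (x - L • latt j) * theta (L • latt i - L • latt j)
            else 0) →
        (∫⁻ x, ENNReal.ofReal (|h x| * theta (x - x₀))) ≤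
          ENNReal.ofReal (C₁ * ∑' i : Ξ, g i * theta (x₀ - L • latt i)) := by
  intro C hC
  have := integral_theta_pos
  have := tsum_theta_latt_pos
  refine ⟨C * 2048 * (∫ x, theta x) * ∑' n, theta (latt n), by positivity, 1, one_pos, ?_⟩
  intro L hL x₀ Ξ g h hg hsum hh
  set ξ : Ξ → ℝ² := fun i => L • latt i
  have hΞ : ∀ y, ∑' j : Ξ, Θ (ξ j - y) ≤ 8 * ∑' n, Θ (latt n) := fun y =>
    (ENNReal.tsum_comp_le_tsum_of_injective Subtype.val_injective _).trans
      (tsum_theta_smul_latt_sub_le hL y)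
  have pointwise : ∀ x, ENNReal.ofReal (|h x| * theta (x - x₀)) ≤ ENNReal.ofReal C *
      ((∑' i : Ξ, ∑' j : Ξ, ENNReal.ofReal (g i) * Θ (x - ξ j) * Θ (ξ i - ξ j)) * Θ (x - x₀)) :=
    fun x => by
      rw [ofReal_mul' (theta_nonneg _), ← mul_assoc]
      gcongr
      exact ofReal_le_mul_tsum_tsum_theta _ ξ (fun i => hg i) hC.le (hh x)
  calc ∫⁻ x, ENNReal.ofReal (|h x| * theta (x - x₀))
      ≤ ENNReal.ofReal C * ∫⁻ x, (∑' i : Ξ, ∑' j : Ξ,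
          ENNReal.ofReal (g i) * Θ (x - ξ j) * Θ (ξ i - ξ j)) * Θ (x - x₀) := by
        rw [← lintegral_const_mul' _ _ ofReal_ne_top]
        exact lintegral_mono pointwise
    _ ≤ ENNReal.ofReal C * (256 * ENNReal.ofReal (∫ x, theta x) * (8 * ∑' n, Θ (latt n)) *
          ∑' i : Ξ, ENNReal.ofReal (g i) * Θ (x₀ - ξ i)) := by
        gcongr
        exact lintegral_tsum_tsum_theta_le volume (fun y => (lintegral_theta_sub y).le) ξ hΞ _ x₀
    _ = _ := by
        rw [ofReal_mul (by positivity), ofReal_mul (by positivity), ofReal_mul (by positivity),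
          ofReal_mul hC.le, ofReal_ofNat,
          ofReal_tsum_of_nonneg (fun n => theta_nonneg _) summable_theta_latt,
          ofReal_tsum_of_nonneg (fun i : Ξ => mul_nonneg (hg i) (theta_nonneg (x₀ - ξ i))) hsum]
        simp only [ofReal_mul (hg _)]
        ring
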